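/- For nonempty A ⊆ {1,…,d}, let W_A = {p ∈ ℝ^d : |p_i| = |p_j| for all i,j ∈ A, and |p_i| > |p_j| for all i ∈ A, j ∉ A}, writing W_i for W_{{i}}. Fix ψ ∈ C²(ℝ^d) and, for y ∈ ℝ^d and ε > 0, set Φ^ε(y) = (1/2)·[ min over the 2d values ψ(y ± √ε e_i) − ψ(y), i = 1,…,d, plus max over the same 2d values ]. Then for every x ∈ ℝ^d with Dψ(x) ∈ W_A: (1/2)·min_{j∈A} ψ_{x_jx_j}(x) ≤ liminf_{y→x, ε→0⁺} Φ^ε(y)/ε ≤ limsup_{y→x, ε→0⁺} Φ^ε(y)/ε ≤ (1/2)·max_{j∈A} ψ_{x_jx_j}(x), the bounds holding locally uniformly in x. Moreover, if Dψ(x) ∈ W_i for some i, then lim_{y→x, ε→0⁺} Φ^ε(y)/ε = (1/2)·ψ_{x_ix_i}(x). -/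

import Mathlib

open Filter Set

/-- The `i`-th standard basis vector of `ℝ^d`. -/
noncomputable def stdBasis (d : ℕ) (i : Fin d) : Fin d → ℝ := Pi.single i 1

/-- Second partial derivative `∂²ψ/∂x_i∂x_j`. -/
noncomputable def pd2 {d : ℕ} (ψ : (Fin d → ℝ) → ℝ) (x : Fin d → ℝ) (i j : Fin d) : ℝ :=
  fderiv ℝ (fun y => fderiv ℝ ψ y (stdBasis d j)) x (stdBasis d i)

/-- The gradient `Dψ(x)`. -/
noncomputable def grad {d : ℕ} (ψ : (Fin d → ℝ) → ℝ) (x : Fin d → ℝ) : Fin d → ℝ :=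
  fun i => fderiv ℝ ψ x (stdBasis d i)

/-- For nonempty `A ⊆ {1,…,d}`,
`W_A = {p : |p_i| = |p_j| ∀ i,j ∈ A, and |p_i| > |p_j| ∀ i ∈ A, j ∉ A}`. -/
def WA (d : ℕ) (A : Finset (Fin d)) : Set (Fin d → ℝ) :=
  {p | (∀ i ∈ A, ∀ j ∈ A, |p i| = |p j|) ∧ ∀ i ∈ A, ∀ j : Fin d, j ∉ A → |p j| < |p i|}

/-- `Φ^ε(y) = (1/2)[min over the 2d values ψ(y ± √ε e_i) − ψ(y) + max over the same values]`:
the parabolically rescaled one-step update of the zero-temperature RSOS dynamics. -/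
noncomputable def PhiRSOS {d : ℕ} (ψ : (Fin d → ℝ) → ℝ) (y : Fin d → ℝ) (ε : ℝ) : ℝ :=
  (1 / 2) *
    ((⨅ j : Fin d × Bool,
        (ψ (y + (if j.2 then Real.sqrt ε else -Real.sqrt ε) • stdBasis d j.1) - ψ y)) +
     (⨆ j : Fin d × Bool,
        (ψ (y + (if j.2 then Real.sqrt ε else -Real.sqrt ε) • stdBasis d j.1) - ψ y)))

lemma norm_stdBasis_le (d : ℕ) (i : Fin d) : ‖stdBasis d i‖ ≤ 1 := by
  rw [stdBasis]
  refine (pi_norm_le_iff_of_nonneg zero_le_one).2 fun j => ?_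
  rcases eq_or_ne j i with rfl | h
  · simp
  · simp [Pi.single_apply, Ne.symm h]


lemma pd2_eq {d : ℕ} (ψ : (Fin d → ℝ) → ℝ) (hψ : ContDiff ℝ 2 ψ) (x : Fin d → ℝ) (i j : Fin d) :
    pd2 ψ x i j = fderiv ℝ (fderiv ℝ ψ) x (stdBasis d i) (stdBasis d j) := by
  have hF : Differentiable ℝ (fderiv ℝ ψ) :=
    (hψ.fderiv_right (m := 1) (by norm_num)).differentiable one_ne_zero
  have : pd2 ψ x i j
      = fderiv ℝ (fun y => (fderiv ℝ ψ y) ((fun _ => stdBasis d j) y)) x (stdBasis d i) := rfl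
  rw [this, fderiv_clm_apply (hF x) (differentiableAt_const _)]
  simp

lemma taylor_aux {d : ℕ} (ψ : (Fin d → ℝ) → ℝ) (hψ : ContDiff ℝ 2 ψ) (x : Fin d → ℝ)
    {δ : ℝ} (hδ : 0 < δ) :
    ∃ r > 0, ∀ y : Fin d → ℝ, ‖y - x‖ < r → ∀ t : ℝ, |t| ≤ r → ∀ i : Fin d,
      |ψ (y + t • stdBasis d i) - ψ y - t * fderiv ℝ ψ y (stdBasis d i)
        - t ^ 2 / 2 * pd2 ψ x i i| ≤ δ * t ^ 2 := by
  have hF1 : ContDiff ℝ 1 (fderiv ℝ ψ) := hψ.fderiv_right (m := 1) (by norm_num)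
  have hFdiff : Differentiable ℝ (fderiv ℝ ψ) := hF1.differentiable one_ne_zero
  have hψdiff : Differentiable ℝ ψ := hψ.differentiable (by norm_num)
  have hF2cont : Continuous (fderiv ℝ (fderiv ℝ ψ)) := hF1.continuous_fderiv one_ne_zero
  -- continuity of second derivative entries
  have hev : ∀ᶠ z in nhds x, ∀ i : Fin d,
      |fderiv ℝ (fderiv ℝ ψ) z (stdBasis d i) (stdBasis d i)
        - fderiv ℝ (fderiv ℝ ψ) x (stdBasis d i) (stdBasis d i)| < δ := by
    rw [eventually_all]
    intro i
    have hc : Continuous fun z =>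
        fderiv ℝ (fderiv ℝ ψ) z (stdBasis d i) (stdBasis d i) :=
      (hF2cont.clm_apply continuous_const).clm_apply continuous_const
    have := hc.continuousAt (x := x) (Metric.ball_mem_nhds _ hδ)
    filter_upwards [this] with z hz
    simpa [Real.dist_eq] using hz
  rcases Metric.eventually_nhds_iff.1 hev with ⟨r0, hr0, hball⟩
  refine ⟨r0 / 2, by positivity, fun y hy t ht i => ?_⟩
  set e : Fin d → ℝ := stdBasis d i with he
  set Bi : ℝ := pd2 ψ x i i with hBi
  have hBi' : Bi = fderiv ℝ (fderiv ℝ ψ) x e e := pd2_eq ψ hψ x i i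
  -- points on the segment are within r0 of x
  have hmem : ∀ s : ℝ, |s| ≤ |t| → dist (y + s • e) x < r0 := by
    intro s hs
    have h1 : ‖y + s • e - x‖ ≤ ‖y - x‖ + ‖s • e‖ := by
      have : y + s • e - x = (y - x) + s • e := by abel
      rw [this]; exact norm_add_le _ _
    have h2 : ‖s • e‖ ≤ |s| := by
      rw [norm_smul, Real.norm_eq_abs]
      calc |s| * ‖e‖ ≤ |s| * 1 := by
            exact mul_le_mul_of_nonneg_left (norm_stdBasis_le d i) (abs_nonneg s)
        _ = |s| := mul_one _
    rw [dist_eq_norm]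
    calc ‖y + s • e - x‖ ≤ ‖y - x‖ + |s| := by linarith
      _ < r0 / 2 + r0 / 2 := by
          have : |s| ≤ r0 / 2 := le_trans hs ht
          linarith
      _ = r0 := by ring
  -- derivative bound on the segment for u
  have hsegabs : ∀ s ∈ uIcc (0:ℝ) t, |s| ≤ |t| := by
    intro s hs
    rw [uIcc] at hs
    have h1 := hs.1
    have h2 := hs.2
    rcases abs_cases t with ⟨h, h'⟩ <;> rcases abs_cases s with ⟨g, g'⟩ <;>
      simp [min_def, max_def] at h1 h2 <;> split_ifs at h1 h2 <;> linarith
  -- claim A : mean value for u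
  have hlineD : ∀ s : ℝ, HasDerivAt (fun s : ℝ => y + s • e) e s := by
    intro s
    have : HasDerivAt (fun s : ℝ => s • e) ((1:ℝ) • e) s := (hasDerivAt_id s).smul_const e
    simpa using this.const_add y
  have huD : ∀ s : ℝ, HasDerivAt (fun s => fderiv ℝ ψ (y + s • e) e - s * Bi)
      (fderiv ℝ (fderiv ℝ ψ) (y + s • e) e e - Bi) s := by
    intro s
    have h1 : HasDerivAt (fun s : ℝ => fderiv ℝ ψ (y + s • e))
        (fderiv ℝ (fderiv ℝ ψ) (y + s • e) e) s :=
      (hFdiff _).hasFDerivAt.comp_hasDerivAt s (hlineD s)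
    have h2 : HasDerivAt (fun s : ℝ => fderiv ℝ ψ (y + s • e) e)
        (fderiv ℝ (fderiv ℝ ψ) (y + s • e) e e) s := by
      have := h1.clm_apply (hasDerivAt_const s e)
      simpa using this
    have h3 : HasDerivAt (fun s : ℝ => s * Bi) Bi s := by
      simpa using (hasDerivAt_id s).mul_const Bi
    exact h2.sub h3
  have claimA : ∀ s ∈ uIcc (0:ℝ) t,
      |fderiv ℝ ψ (y + s • e) e - fderiv ℝ ψ y e - s * Bi| ≤ δ * |t| := by
    intro s hs
    have hmv := Convex.norm_image_sub_le_of_norm_hasDerivWithin_le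
      (f := fun s => fderiv ℝ ψ (y + s • e) e - s * Bi)
      (f' := fun s => fderiv ℝ (fderiv ℝ ψ) (y + s • e) e e - Bi) (C := δ)
      (fun z hz => (huD z).hasDerivWithinAt)
      (fun z hz => by
        have := hball (hmem z (hsegabs z hz))
        rw [Real.norm_eq_abs, hBi']
        exact (this i).le)
      (convex_uIcc 0 t) (left_mem_uIcc) hs
    have : |s| ≤ |t| := hsegabs s hs
    rw [Real.norm_eq_abs] at hmv
    simp only [sub_zero, zero_mul, Real.norm_eq_abs] at hmv
    calc |fderiv ℝ ψ (y + s • e) e - fderiv ℝ ψ y e - s * Bi|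
        = |(fderiv ℝ ψ (y + s • e) e - s * Bi) - (fderiv ℝ ψ (y + 0 • e) e - 0 * Bi)| := by
          simp only [zero_smul, add_zero, zero_mul, sub_zero]; ring_nf
      _ ≤ δ * |s| := by
          simpa [Real.norm_eq_abs] using hmv
      _ ≤ δ * |t| := mul_le_mul_of_nonneg_left this hδ.le
  -- claim B : mean value for g
  have hgD : ∀ s : ℝ, HasDerivAt
      (fun s : ℝ => ψ (y + s • e) - s * fderiv ℝ ψ y e - s ^ 2 * (Bi / 2))
      (fderiv ℝ ψ (y + s • e) e - fderiv ℝ ψ y e - s * Bi) s := by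
    intro s
    have h1 : HasDerivAt (fun s : ℝ => ψ (y + s • e)) (fderiv ℝ ψ (y + s • e) e) s :=
      (hψdiff _).hasFDerivAt.comp_hasDerivAt s (hlineD s)
    have h2 : HasDerivAt (fun s : ℝ => s * fderiv ℝ ψ y e) (fderiv ℝ ψ y e) s := by
      simpa using (hasDerivAt_id s).mul_const (fderiv ℝ ψ y e)
    have h3 : HasDerivAt (fun s : ℝ => s ^ 2 * (Bi / 2)) (s * Bi) s := by
      have := (hasDerivAt_pow 2 s).mul_const (Bi / 2)
      refine this.congr_deriv ?_
      push_cast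
      ring
    exact (h1.sub h2).sub h3
  have hmv2 := Convex.norm_image_sub_le_of_norm_hasDerivWithin_le
    (f := fun s : ℝ => ψ (y + s • e) - s * fderiv ℝ ψ y e - s ^ 2 * (Bi / 2))
    (f' := fun s => fderiv ℝ ψ (y + s • e) e - fderiv ℝ ψ y e - s * Bi) (C := δ * |t|)
    (fun z hz => (hgD z).hasDerivWithinAt)
    (fun z hz => by rw [Real.norm_eq_abs]; exact claimA z hz)
    (convex_uIcc 0 t) (left_mem_uIcc) (right_mem_uIcc)
  simp only [Real.norm_eq_abs, sub_zero] at hmv2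
  have h0 : y + (0:ℝ) • e = y := by simp
  rw [h0] at hmv2
  calc |ψ (y + t • e) - ψ y - t * fderiv ℝ ψ y e - t ^ 2 / 2 * Bi|
      = |(ψ (y + t • e) - t * fderiv ℝ ψ y e - t ^ 2 * (Bi / 2))
          - (ψ y - 0 * fderiv ℝ ψ y e - 0 ^ 2 * (Bi / 2))| := by ring_nf
    _ ≤ δ * |t| * |t| := by simpa using hmv2
    _ = δ * t ^ 2 := by rw [mul_assoc, abs_mul_abs_self]; ring

set_option maxHeartbeats 1000000 in
lemma core_bound {d : ℕ} (hd : 0 < d) (ψ : (Fin d → ℝ) → ℝ) (hψ : ContDiff ℝ 2 ψ)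
    (x : Fin d → ℝ) (A : Finset (Fin d)) (hA : A.Nonempty)
    (hgrad : grad ψ x ∈ WA d A) {δ : ℝ} (hδ : 0 < δ) :
    ∀ᶠ q : (Fin d → ℝ) × ℝ in (nhds x) ×ˢ (nhdsWithin 0 (Set.Ioi 0)),
      (A.inf' hA fun j => pd2 ψ x j j) / 2 - δ ≤ PhiRSOS ψ q.1 q.2 / q.2 ∧
      PhiRSOS ψ q.1 q.2 / q.2 ≤ (A.sup' hA fun j => pd2 ψ x j j) / 2 + δ := by
  obtain ⟨i₀, hi₀⟩ := hA
  have hFc : Continuous (fderiv ℝ ψ) := hψ.continuous_fderiv (by norm_num)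
  have hacont : ∀ i : Fin d, Continuous fun y => fderiv ℝ ψ y (stdBasis d i) :=
    fun i => hFc.clm_apply continuous_const
  obtain ⟨r, hr, htay⟩ := taylor_aux ψ hψ x (δ := δ / 4) (by linarith)
  set bmin := A.inf' ⟨i₀, hi₀⟩ fun j => pd2 ψ x j j with hbmin
  set bmax := A.sup' ⟨i₀, hi₀⟩ fun j => pd2 ψ x j j with hbmax
  clear_value bmin bmax
  have hEy : ∀ᶠ q : (Fin d → ℝ) × ℝ in (nhds x) ×ˢ (nhdsWithin 0 (Set.Ioi 0)),
      ‖q.1 - x‖ < r := by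
    have h : ∀ᶠ y in nhds x, ‖y - x‖ < r := by
      filter_upwards [Metric.ball_mem_nhds x hr] with y hy
      simpa [Metric.mem_ball, dist_eq_norm] using hy
    exact h.prod_inl _
  have hEε : ∀ᶠ q : (Fin d → ℝ) × ℝ in (nhds x) ×ˢ (nhdsWithin 0 (Set.Ioi 0)),
      q.2 ∈ Ioo (0:ℝ) (r ^ 2) := by
    have h : ∀ᶠ ε in nhdsWithin (0:ℝ) (Set.Ioi 0), ε ∈ Ioo (0:ℝ) (r ^ 2) :=
      Ioo_mem_nhdsGT_of_mem ⟨le_refl 0, by positivity⟩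
    exact h.prod_inr _
  have hEgap : ∀ᶠ q : (Fin d → ℝ) × ℝ in (nhds x) ×ˢ (nhdsWithin 0 (Set.Ioi 0)),
      ∀ j ∈ Finset.univ.filter (fun j : Fin d => j ∉ A),
        |fderiv ℝ ψ q.1 (stdBasis d j)| ≤
            |fderiv ℝ ψ q.1 (stdBasis d i₀)| - (|grad ψ x i₀| - |grad ψ x j|) / 2 ∧
        q.2 / 2 * |pd2 ψ x j j - bmax| ≤
            Real.sqrt q.2 * ((|grad ψ x i₀| - |grad ψ x j|) / 2) ∧
        q.2 / 2 * |pd2 ψ x j j - bmin| ≤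
            Real.sqrt q.2 * ((|grad ψ x i₀| - |grad ψ x j|) / 2) := by
    rw [eventually_all_finset]
    intro j hj
    rw [Finset.mem_filter] at hj
    have hηpos : 0 < |grad ψ x i₀| - |grad ψ x j| :=
      sub_pos.2 (hgrad.2 i₀ hi₀ j hj.2)
    set η := |grad ψ x i₀| - |grad ψ x j| with hη
    clear_value η
    set C := |pd2 ψ x j j - bmax| + |pd2 ψ x j j - bmin| + 1 with hC
    have hCpos : 0 < C := by rw [hC]; positivity
    have ha1 : |pd2 ψ x j j - bmax| ≤ C := by
      rw [hC]; linarith [abs_nonneg (pd2 ψ x j j - bmin)]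
    have ha2 : |pd2 ψ x j j - bmin| ≤ C := by
      rw [hC]; linarith [abs_nonneg (pd2 ψ x j j - bmax)]
    clear_value C
    have h1 : ∀ᶠ y in nhds x,
        |fderiv ℝ ψ y (stdBasis d j)| ≤ |fderiv ℝ ψ y (stdBasis d i₀)| - η / 2 := by
      have hc : ContinuousAt
          (fun y => |fderiv ℝ ψ y (stdBasis d i₀)| - |fderiv ℝ ψ y (stdBasis d j)|) x :=
        ((hacont i₀).abs.sub (hacont j).abs).continuousAt
      have hval : η / 2 <
          |fderiv ℝ ψ x (stdBasis d i₀)| - |fderiv ℝ ψ x (stdBasis d j)| := by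
        show η / 2 < |grad ψ x i₀| - |grad ψ x j|
        rw [← hη]; linarith
      filter_upwards [hc.eventually (lt_mem_nhds hval)] with y hy
      linarith
    have h2 : ∀ᶠ ε in nhdsWithin (0:ℝ) (Set.Ioi 0),
        ε / 2 * |pd2 ψ x j j - bmax| ≤ Real.sqrt ε * (η / 2) ∧
        ε / 2 * |pd2 ψ x j j - bmin| ≤ Real.sqrt ε * (η / 2) := by
      have hmem : Ioc (0:ℝ) ((η / C) ^ 2) ∈ nhdsWithin (0:ℝ) (Set.Ioi 0) :=
        Ioc_mem_nhdsGT_of_mem ⟨le_refl _, pow_pos (div_pos hηpos hCpos) 2⟩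
      filter_upwards [hmem] with ε hε
      obtain ⟨hε0, hεle⟩ := hε
      have hs0 : (0:ℝ) ≤ Real.sqrt ε := Real.sqrt_nonneg ε
      have hss : Real.sqrt ε * Real.sqrt ε = ε := Real.mul_self_sqrt hε0.le
      have hsqle : Real.sqrt ε ≤ η / C := by
        have h := Real.sqrt_le_sqrt hεle
        rwa [Real.sqrt_sq (le_of_lt (div_pos hηpos hCpos))] at h
      have h' : Real.sqrt ε * C ≤ η := (le_div_iff₀ hCpos).mp hsqle
      have key : ε / 2 * C ≤ Real.sqrt ε * (η / 2) := by
        have h'' : Real.sqrt ε * (Real.sqrt ε * C) ≤ Real.sqrt ε * η :=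
          mul_le_mul_of_nonneg_left h' hs0
        have e1 : Real.sqrt ε * (Real.sqrt ε * C) = ε * C := by rw [← mul_assoc, hss]
        rw [e1] at h''
        linarith
      constructor
      · linarith [mul_le_mul_of_nonneg_left ha1 (by positivity : (0:ℝ) ≤ ε / 2)]
      · linarith [mul_le_mul_of_nonneg_left ha2 (by positivity : (0:ℝ) ≤ ε / 2)]
    exact ((h1.prod_inl _).and (h2.prod_inr _)).mono fun q hq => ⟨hq.1, hq.2.1, hq.2.2⟩
  filter_upwards [hEy, hEε, hEgap] with q hy hε hgap
  obtain ⟨y, ε⟩ := q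
  simp only at hy hε hgap ⊢
  obtain ⟨hε0, hεr⟩ := hε
  simp only [PhiRSOS]
  haveI : Nonempty (Fin d) := ⟨⟨0, hd⟩⟩
  have hs0 : 0 < Real.sqrt ε := Real.sqrt_pos.2 hε0
  have hss : Real.sqrt ε * Real.sqrt ε = ε := Real.mul_self_sqrt hε0.le
  have hsr : Real.sqrt ε ≤ r := by
    have h1 : Real.sqrt ε ≤ Real.sqrt (r ^ 2) := Real.sqrt_le_sqrt hεr.le
    rwa [Real.sqrt_sq hr.le] at h1
  set s := Real.sqrt ε with hsdef
  clear_value s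
  have hsr' : ∀ b : Bool, |if b then s else -s| ≤ r := by
    intro b
    cases b <;> simp [abs_of_nonneg hs0.le, hsr]
  set Δ : Fin d × Bool → ℝ := fun p =>
    ψ (y + (if p.2 then s else -s) • stdBasis d p.1) - ψ y with hΔdef
  clear_value Δ
  set ℓ := A.sup' ⟨i₀, hi₀⟩ fun i => |fderiv ℝ ψ y (stdBasis d i)| with hℓdef
  clear_value ℓ
  have habs_t : ∀ b : Bool, |if b then s else -s| = s := by
    intro b; cases b <;> simp [abs_of_nonneg hs0.le]
  have htayl : ∀ (i : Fin d) (b : Bool),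
      |Δ (i, b) - ((if b then s else -s) * fderiv ℝ ψ y (stdBasis d i)
        + ε / 2 * pd2 ψ x i i)| ≤ δ / 4 * ε := by
    intro i b
    have h := htay y hy (if b then s else -s) (hsr' b) i
    have ht2 : (if b then s else -s) ^ 2 = ε := by
      cases b <;> simp only [if_true, if_false, neg_sq, Bool.false_eq_true, ite_false, ite_true]
        <;> rw [sq, hss]
    rw [ht2] at h
    have hring : Δ (i, b) - ((if b then s else -s) * fderiv ℝ ψ y (stdBasis d i)
        + ε / 2 * pd2 ψ x i i) =
        ψ (y + (if b then s else -s) • stdBasis d i) - ψ y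
          - (if b then s else -s) * fderiv ℝ ψ y (stdBasis d i)
          - ε / 2 * pd2 ψ x i i := by
      rw [hΔdef]; ring
    rw [hring]
    exact h
  have hbnd : ∀ (i : Fin d) (b : Bool),
      (if b then s else -s) * fderiv ℝ ψ y (stdBasis d i) ≤
        s * |fderiv ℝ ψ y (stdBasis d i)| ∧
      -(s * |fderiv ℝ ψ y (stdBasis d i)|) ≤
        (if b then s else -s) * fderiv ℝ ψ y (stdBasis d i) := by
    intro i b
    constructor
    · calc (if b then s else -s) * fderiv ℝ ψ y (stdBasis d i)
          ≤ |(if b then s else -s) * fderiv ℝ ψ y (stdBasis d i)| := le_abs_self _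
        _ = s * |fderiv ℝ ψ y (stdBasis d i)| := by rw [abs_mul, habs_t]
    · have h := neg_abs_le ((if b then s else -s) * fderiv ℝ ψ y (stdBasis d i))
      rwa [abs_mul, habs_t] at h
  have hub : ∀ (i : Fin d) (b : Bool), Δ (i, b) ≤ s * ℓ + ε / 2 * bmax + δ / 4 * ε := by
    intro i b
    have h := (abs_le.1 (htayl i b)).2
    have h1 := (hbnd i b).1
    by_cases hiA : i ∈ A
    · have hℓi : |fderiv ℝ ψ y (stdBasis d i)| ≤ ℓ := by
        rw [hℓdef]; exact Finset.le_sup' (fun i => |fderiv ℝ ψ y (stdBasis d i)|) hiA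
      have hbi : pd2 ψ x i i ≤ bmax := by
        rw [hbmax]; exact Finset.le_sup' (fun j => pd2 ψ x j j) hiA
      have m1 : s * |fderiv ℝ ψ y (stdBasis d i)| ≤ s * ℓ :=
        mul_le_mul_of_nonneg_left hℓi hs0.le
      have m2 : ε / 2 * pd2 ψ x i i ≤ ε / 2 * bmax :=
        mul_le_mul_of_nonneg_left hbi (by positivity)
      linarith
    · obtain ⟨hg1, hg2, _⟩ := hgap i (Finset.mem_filter.2 ⟨Finset.mem_univ i, hiA⟩)
      have hℓ0 : |fderiv ℝ ψ y (stdBasis d i₀)| ≤ ℓ := by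
        rw [hℓdef]; exact Finset.le_sup' (fun i => |fderiv ℝ ψ y (stdBasis d i)|) hi₀
      have m1 : s * |fderiv ℝ ψ y (stdBasis d i)| ≤
          s * (|fderiv ℝ ψ y (stdBasis d i₀)| - (|grad ψ x i₀| - |grad ψ x i|) / 2) :=
        mul_le_mul_of_nonneg_left hg1 hs0.le
      have m1' : s * |fderiv ℝ ψ y (stdBasis d i₀)| ≤ s * ℓ :=
        mul_le_mul_of_nonneg_left hℓ0 hs0.le
      have m2 : ε / 2 * (pd2 ψ x i i - bmax) ≤ ε / 2 * |pd2 ψ x i i - bmax| :=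
        mul_le_mul_of_nonneg_left (le_abs_self _) (by positivity)
      nlinarith [hg2]
  have hlb : ∀ (i : Fin d) (b : Bool),
      -(s * ℓ) + ε / 2 * bmin - δ / 4 * ε ≤ Δ (i, b) := by
    intro i b
    have h := (abs_le.1 (htayl i b)).1
    have h1 := (hbnd i b).2
    by_cases hiA : i ∈ A
    · have hℓi : |fderiv ℝ ψ y (stdBasis d i)| ≤ ℓ := by
        rw [hℓdef]; exact Finset.le_sup' (fun i => |fderiv ℝ ψ y (stdBasis d i)|) hiA
      have hbi : bmin ≤ pd2 ψ x i i := by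
        rw [hbmin]; exact Finset.inf'_le (fun j => pd2 ψ x j j) hiA
      have m1 : s * |fderiv ℝ ψ y (stdBasis d i)| ≤ s * ℓ :=
        mul_le_mul_of_nonneg_left hℓi hs0.le
      have m2 : ε / 2 * bmin ≤ ε / 2 * pd2 ψ x i i :=
        mul_le_mul_of_nonneg_left hbi (by positivity)
      linarith
    · obtain ⟨hg1, _, hg3⟩ := hgap i (Finset.mem_filter.2 ⟨Finset.mem_univ i, hiA⟩)
      have hℓ0 : |fderiv ℝ ψ y (stdBasis d i₀)| ≤ ℓ := by
        rw [hℓdef]; exact Finset.le_sup' (fun i => |fderiv ℝ ψ y (stdBasis d i)|) hi₀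
      have m1 : s * |fderiv ℝ ψ y (stdBasis d i)| ≤
          s * (|fderiv ℝ ψ y (stdBasis d i₀)| - (|grad ψ x i₀| - |grad ψ x i|) / 2) :=
        mul_le_mul_of_nonneg_left hg1 hs0.le
      have m1' : s * |fderiv ℝ ψ y (stdBasis d i₀)| ≤ s * ℓ :=
        mul_le_mul_of_nonneg_left hℓ0 hs0.le
      have m2 : ε / 2 * (bmin - pd2 ψ x i i) ≤ ε / 2 * |pd2 ψ x i i - bmin| := by
        have h3 := le_abs_self (bmin - pd2 ψ x i i)
        rw [abs_sub_comm] at h3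
        exact mul_le_mul_of_nonneg_left h3 (by positivity)
      nlinarith [hg3]
  have hM : (⨆ p, Δ p) ≤ s * ℓ + ε / 2 * bmax + δ / 4 * ε :=
    ciSup_le fun p => hub p.1 p.2
  have hm : -(s * ℓ) + ε / 2 * bmin - δ / 4 * ε ≤ (⨅ p, Δ p) :=
    le_ciInf fun p => hlb p.1 p.2
  obtain ⟨iw, hiw, hℓw⟩ :=
    A.exists_mem_eq_sup' ⟨i₀, hi₀⟩ (fun i => |fderiv ℝ ψ y (stdBasis d i)|)
  have hsℓw : s * ℓ = s * |fderiv ℝ ψ y (stdBasis d iw)| := by rw [hℓdef, hℓw]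
  have hbminw : ε / 2 * bmin ≤ ε / 2 * pd2 ψ x iw iw :=
    mul_le_mul_of_nonneg_left (by rw [hbmin]; exact Finset.inf'_le (fun j => pd2 ψ x j j) hiw)
      (by positivity)
  have hbmaxw : ε / 2 * pd2 ψ x iw iw ≤ ε / 2 * bmax :=
    mul_le_mul_of_nonneg_left (by rw [hbmax]; exact Finset.le_sup' (fun j => pd2 ψ x j j) hiw)
      (by positivity)
  have hMw : s * ℓ + ε / 2 * bmin - δ / 4 * ε ≤ (⨆ p, Δ p) := by
    by_cases hc : 0 ≤ fderiv ℝ ψ y (stdBasis d iw)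
    · have h := (abs_le.1 (htayl iw true)).1
      have htv : (if true then s else -s) * fderiv ℝ ψ y (stdBasis d iw)
          = s * |fderiv ℝ ψ y (stdBasis d iw)| := by
        rw [if_pos rfl, abs_of_nonneg hc]
      rw [htv] at h
      have hle : Δ (iw, true) ≤ ⨆ p, Δ p :=
        le_ciSup (Set.Finite.bddAbove (Set.finite_range Δ)) (iw, true)
      linarith
    · have h := (abs_le.1 (htayl iw false)).1
      have htv : (if false then s else -s) * fderiv ℝ ψ y (stdBasis d iw)
          = s * |fderiv ℝ ψ y (stdBasis d iw)| := by
        rw [if_neg Bool.false_ne_true, abs_of_neg (lt_of_not_ge hc)]; ring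
      rw [htv] at h
      have hle : Δ (iw, false) ≤ ⨆ p, Δ p :=
        le_ciSup (Set.Finite.bddAbove (Set.finite_range Δ)) (iw, false)
      linarith
  have hmw : (⨅ p, Δ p) ≤ -(s * ℓ) + ε / 2 * bmax + δ / 4 * ε := by
    by_cases hc : 0 ≤ fderiv ℝ ψ y (stdBasis d iw)
    · have h := (abs_le.1 (htayl iw false)).2
      have htv : (if false then s else -s) * fderiv ℝ ψ y (stdBasis d iw)
          = -(s * |fderiv ℝ ψ y (stdBasis d iw)|) := by
        rw [if_neg Bool.false_ne_true, abs_of_nonneg hc]; ring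
      rw [htv] at h
      have hle : (⨅ p, Δ p) ≤ Δ (iw, false) :=
        ciInf_le (Set.Finite.bddBelow (Set.finite_range Δ)) (iw, false)
      linarith
    · have h := (abs_le.1 (htayl iw true)).2
      have htv : (if true then s else -s) * fderiv ℝ ψ y (stdBasis d iw)
          = -(s * |fderiv ℝ ψ y (stdBasis d iw)|) := by
        rw [if_pos rfl, abs_of_neg (lt_of_not_ge hc)]; ring
      rw [htv] at h
      have hle : (⨅ p, Δ p) ≤ Δ (iw, true) :=
        ciInf_le (Set.Finite.bddBelow (Set.finite_range Δ)) (iw, true)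
      linarith
  constructor
  · rw [le_div_iff₀ hε0]
    nlinarith [hm, hMw, mul_pos hδ hε0]
  · rw [div_le_iff₀ hε0]
    nlinarith [hM, hmw, mul_pos hδ hε0]

/-- **Consistency of the parabolically scaled RSOS scheme (Lemma 5.6).**
If `Dψ(x) ∈ W_A` then
`(1/2) min_{j∈A} ψ_{x_jx_j}(x) ≤ liminf Φ^ε(y)/ε ≤ limsup Φ^ε(y)/ε ≤ (1/2) max_{j∈A} ψ_{x_jx_j}(x)`
as `y → x, ε → 0⁺`; moreover if `Dψ(x) ∈ W_i` for some `i`, then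
`lim Φ^ε(y)/ε = (1/2) ψ_{x_ix_i}(x)`. -/
theorem stmt17 (d : ℕ) (hd : 0 < d) (ψ : (Fin d → ℝ) → ℝ) (hψ : ContDiff ℝ 2 ψ)
    (x : Fin d → ℝ) (A : Finset (Fin d)) (hA : A.Nonempty)
    (hgrad : grad ψ x ∈ WA d A) :
    ((A.inf' hA fun j => pd2 ψ x j j) / 2 ≤
        liminf (fun q : (Fin d → ℝ) × ℝ => PhiRSOS ψ q.1 q.2 / q.2)
          ((nhds x) ×ˢ (nhdsWithin 0 (Set.Ioi 0))) ∧
      liminf (fun q : (Fin d → ℝ) × ℝ => PhiRSOS ψ q.1 q.2 / q.2)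
          ((nhds x) ×ˢ (nhdsWithin 0 (Set.Ioi 0))) ≤
        limsup (fun q : (Fin d → ℝ) × ℝ => PhiRSOS ψ q.1 q.2 / q.2)
          ((nhds x) ×ˢ (nhdsWithin 0 (Set.Ioi 0))) ∧
      limsup (fun q : (Fin d → ℝ) × ℝ => PhiRSOS ψ q.1 q.2 / q.2)
          ((nhds x) ×ˢ (nhdsWithin 0 (Set.Ioi 0))) ≤
        (A.sup' hA fun j => pd2 ψ x j j) / 2) ∧
    (∀ i : Fin d, grad ψ x ∈ WA d {i} →
      Tendsto (fun q : (Fin d → ℝ) × ℝ => PhiRSOS ψ q.1 q.2 / q.2)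
        ((nhds x) ×ˢ (nhdsWithin 0 (Set.Ioi 0)))
        (nhds (pd2 ψ x i i / 2))) := by
  haveI : ((nhds x) ×ˢ (nhdsWithin (0:ℝ) (Set.Ioi 0))).NeBot :=
    Filter.prod_neBot.2 ⟨inferInstance, inferInstance⟩
  have h1 := core_bound hd ψ hψ x A hA hgrad (δ := 1) one_pos
  have hbA : IsBoundedUnder (· ≤ ·) ((nhds x) ×ˢ (nhdsWithin (0:ℝ) (Set.Ioi 0)))
      (fun q : (Fin d → ℝ) × ℝ => PhiRSOS ψ q.1 q.2 / q.2) :=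
    ⟨(A.sup' hA fun j => pd2 ψ x j j) / 2 + 1, by
      simpa [eventually_map] using h1.mono fun q hq => hq.2⟩
  have hbB : IsBoundedUnder (· ≥ ·) ((nhds x) ×ˢ (nhdsWithin (0:ℝ) (Set.Ioi 0)))
      (fun q : (Fin d → ℝ) × ℝ => PhiRSOS ψ q.1 q.2 / q.2) :=
    ⟨(A.inf' hA fun j => pd2 ψ x j j) / 2 - 1, by
      simpa [eventually_map] using h1.mono fun q hq => hq.1⟩
  refine ⟨⟨?_, liminf_le_limsup hbA hbB, ?_⟩, ?_⟩
  · by_contra h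
    push_neg at h
    set Lf := liminf (fun q : (Fin d → ℝ) × ℝ => PhiRSOS ψ q.1 q.2 / q.2)
      ((nhds x) ×ˢ (nhdsWithin 0 (Set.Ioi 0))) with hLf
    have hδ : 0 < ((A.inf' hA fun j => pd2 ψ x j j) / 2 - Lf) / 2 := by linarith
    have h2 := core_bound hd ψ hψ x A hA hgrad hδ
    have h3 : (A.inf' hA fun j => pd2 ψ x j j) / 2
        - ((A.inf' hA fun j => pd2 ψ x j j) / 2 - Lf) / 2 ≤ Lf :=
      le_liminf_of_le (hbA.isCoboundedUnder_ge) (h2.mono fun q hq => hq.1)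
    linarith
  · by_contra h
    push_neg at h
    set Ls := limsup (fun q : (Fin d → ℝ) × ℝ => PhiRSOS ψ q.1 q.2 / q.2)
      ((nhds x) ×ˢ (nhdsWithin 0 (Set.Ioi 0))) with hLs
    have hδ : 0 < (Ls - (A.sup' hA fun j => pd2 ψ x j j) / 2) / 2 := by linarith
    have h2 := core_bound hd ψ hψ x A hA hgrad hδ
    have h3 : Ls ≤ (A.sup' hA fun j => pd2 ψ x j j) / 2
        + (Ls - (A.sup' hA fun j => pd2 ψ x j j) / 2) / 2 :=
      limsup_le_of_le (hbB.isCoboundedUnder_le) (h2.mono fun q hq => hq.2)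
    linarith
  · intro i hgi
    rw [Metric.tendsto_nhds]
    intro δ hδ
    have h2 := core_bound hd ψ hψ x {i} (Finset.singleton_nonempty i) hgi
      (δ := δ / 2) (by linarith)
    filter_upwards [h2] with q hq
    rw [Finset.inf'_singleton, Finset.sup'_singleton] at hq
    rw [Real.dist_eq, abs_lt]
    constructor <;> linarith [hq.1, hq.2]
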